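/- The maps s ↦ ω₀(s) and s ↦ ω_∞(s), from the set of all sequences s = (s_k)_{k≥1} with s_k ∈ {Ũ, Ṽ} to one-sided infinite words over {a, b}, are both injective. In particular, the families {ω₀(s)} and {ω_∞(s)} are each uncountable. -/

import Mathlib

inductive AB
  | a
  | b

/-- The substitution χ on letters: both symbols of χ(a) = 22 are 2, both of χ(b) = 11 are 1. -/
def chiVal : AB → ℕ
  | AB.a => 2
  | AB.b => 1

/-- χ on finite words over {a, b}, producing a word over {1, 2}. -/
def chiW (w : List AB) : List ℕ :=
  w.flatMap (fun c => [chiVal c, chiVal c])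

/-- χ on one-sided infinite words over {a, b}. -/
def chiInf (w : ℕ → AB) : ℕ → ℕ := fun i => chiVal (w (i / 2))

/-- The pair operation Ũ(α, β) = (αββ, αβββ). -/
def Ut (p : List AB × List AB) : List AB × List AB :=
  (p.1 ++ p.2 ++ p.2, p.1 ++ p.2 ++ p.2 ++ p.2)

/-- The pair operation Ṽ(α, β) = (αβββ, αββββ). -/
def Vt (p : List AB × List AB) : List AB × List AB :=
  (p.1 ++ p.2 ++ p.2 ++ p.2, p.1 ++ p.2 ++ p.2 ++ p.2 ++ p.2)

/-- The sequence of pairs (αₙ(s), βₙ(s)) starting from (a, ab), applying Ũ (for `true`)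
or Ṽ (for `false`) at each step. -/
def pairSeqT (s : ℕ → Bool) : ℕ → List AB × List AB
  | 0 => ([AB.a], [AB.a, AB.b])
  | n + 1 => (if s n then Ut else Vt) (pairSeqT s n)

/-- `w` is the infinite word ω₀(s): every βₙ(s)ᵀ is a prefix of `w`. -/
def isOmega0 (s : ℕ → Bool) (w : ℕ → AB) : Prop :=
  ∀ n : ℕ, ∀ j : ℕ, j < (pairSeqT s n).2.length →
    w j = (pairSeqT s n).2.reverse.getD j AB.a

/-- `w` is the infinite word ω_∞(s): every αₙ(s)βₙ(s)βₙ(s) is a prefix of `w`. -/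
def isOmegaInf (s : ℕ → Bool) (w : ℕ → AB) : Prop :=
  ∀ n : ℕ, ∀ j : ℕ,
    j < ((pairSeqT s n).1 ++ (pairSeqT s n).2 ++ (pairSeqT s n).2).length →
    w j = ((pairSeqT s n).1 ++ (pairSeqT s n).2 ++ (pairSeqT s n).2).getD j AB.a

/-!
Let `n` be the first index at which `s` and `t` differ, say `sₙ = Ũ` and `tₙ = Ṽ`, and let
`(α, β)` be their common `n`-th pair. Then `βₙ₊₁(s) = αβββ` and `βₙ₊₁(t) = αββββ`; if both
reversals were prefixes of one word, `αβββ` would be a suffix of `αββββ`, i.e. (as `|α| ≤ |β|`)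
`α` a suffix of `β`. Likewise, if `αββ·αβββ·αβββ` and `αβββ·αββββ·αββββ` were prefixes of one
word, `β` would be a prefix of `αβ`. Both conclusions fail for `(a, ab)`, and Ũ, Ṽ preserve their
failure, because `αβ^k` is a suffix of `αβ^(k+1)` only if `α` is a suffix of `αβ`, and `β` is a
prefix of `αβ^k` only if it is a prefix of `αβ`.
-/

open Function Set

namespace List

variable {α : Type*}

theorem prefix_of_getD_eq {l₁ l₂ : List α} {d : α} {w : ℕ → α}
    (h₁ : ∀ j < l₁.length, w j = l₁.getD j d) (h₂ : ∀ j < l₂.length, w j = l₂.getD j d)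
    (hle : l₁.length ≤ l₂.length) : l₁ <+: l₂ := by
  rw [prefix_iff_eq_take]
  refine ext_getElem (by simpa using hle) fun j hj₁ hj₂ => ?_
  have hj : j < l₂.length := by omega
  simpa [getD_eq_getElem, hj₁, hj] using (h₁ j hj₁).symm.trans (h₂ j hj)

theorem suffix_of_append_suffix_append {u v δ : List α} (hle : u.length ≤ v.length)
    (h : u ++ δ <:+ u ++ v ++ δ) : u <:+ v :=
  suffix_of_suffix_length_le (suffix_append_self_iff.1 h) (suffix_append u v) hle

theorem prefix_append_of_prefix_append_append {u v ε : List α} (h : v <+: u ++ v ++ ε) :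
    v <+: u ++ v :=
  prefix_of_prefix_length_le h (prefix_append _ _) (by simp)

theorem prefix_append_of_append_prefix {u v ε ζ : List α} (h : u ++ v ++ ε <+: v ++ ζ) :
    v <+: u ++ v :=
  prefix_append_of_prefix_append_append <|
    prefix_of_prefix_length_le (prefix_append v ζ) h (by simp; omega)

end List

section Pairs

variable (s : ℕ → Bool)

theorem length_fst_le_length_snd :
    ∀ n, (pairSeqT s n).1.length ≤ (pairSeqT s n).2.length
  | 0 => by simp [pairSeqT]
  | n + 1 => by cases hs : s n <;> simp [pairSeqT, hs, Ut, Vt]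

theorem not_fst_suffix_snd (n : ℕ) : ¬ (pairSeqT s n).1 <:+ (pairSeqT s n).2 := by
  induction n with
  | zero => simp [pairSeqT, List.suffix_cons_iff]
  | succ n ih =>
    have hle := length_fst_le_length_snd s n
    simp only [pairSeqT]
    generalize pairSeqT s n = p at ih hle
    obtain ⟨u, v⟩ := p
    cases s n
    · exact fun h => ih <|
        List.suffix_of_append_suffix_append (δ := v ++ v ++ v) hle (by simpa [Vt] using h)
    · exact fun h => ih <|
        List.suffix_of_append_suffix_append (δ := v ++ v) hle (by simpa [Ut] using h)

theorem not_snd_prefix_fst_append_snd (n : ℕ) :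
    ¬ (pairSeqT s n).2 <+: (pairSeqT s n).1 ++ (pairSeqT s n).2 := by
  induction n with
  | zero => simp [pairSeqT]
  | succ n ih =>
    simp only [pairSeqT]
    generalize pairSeqT s n = p at ih
    obtain ⟨u, v⟩ := p
    cases s n
    · exact fun h => ih <|
        List.prefix_append_of_prefix_append_append (ε := v ++ v ++ v) (by simpa [Vt] using h)
    · exact fun h => ih <|
        List.prefix_append_of_prefix_append_append (ε := v ++ v) (by simpa [Ut] using h)

end Pairs

theorem pairSeqT_congr {s t : ℕ → Bool} {n : ℕ} (h : ∀ k < n, s k = t k) :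
    pairSeqT s n = pairSeqT t n := by
  induction n with
  | zero => rfl
  | succ n ih => simp only [pairSeqT, h n n.lt_succ_self, ih fun k hk => h k (by omega)]

theorem injective_of_ne_of_pairSeqT_eq {X : Type*} {F : (ℕ → Bool) → X}
    (h : ∀ s t n, pairSeqT s n = pairSeqT t n → s n = true → t n = false → F s ≠ F t) :
    Injective F := fun s t hst => funext fun n => Nat.strong_induction_on n fun n ih => by
  have hp := pairSeqT_congr ih
  cases hsn : s n <;> cases htn : t n
  · rfl
  · exact absurd hst.symm (h t s n hp.symm htn hsn)
  · exact absurd hst (h s t n hp hsn htn)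
  · rfl

theorem not_isOmega0_of_isOmega0 {s t : ℕ → Bool} {n : ℕ} {w : ℕ → AB}
    (hst : pairSeqT s n = pairSeqT t n) (hs : s n = true) (ht : t n = false)
    (hws : isOmega0 s w) : ¬ isOmega0 t w := by
  intro hwt
  have hpre : (pairSeqT s (n + 1)).2.reverse <+: (pairSeqT t (n + 1)).2.reverse :=
    List.prefix_of_getD_eq (by simpa using hws (n + 1)) (by simpa using hwt (n + 1))
      (by simp [pairSeqT, hs, ht, hst, Ut, Vt])
  have hle := length_fst_le_length_snd t n
  have hsuff := not_fst_suffix_snd t n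
  rw [List.reverse_prefix] at hpre
  simp only [pairSeqT, hs, ht, hst] at hpre
  generalize pairSeqT t n = p at hpre hle hsuff
  obtain ⟨u, v⟩ := p
  exact hsuff <|
    List.suffix_of_append_suffix_append (δ := v ++ v ++ v) hle (by simpa [Ut, Vt] using hpre)

theorem not_isOmegaInf_of_isOmegaInf {s t : ℕ → Bool} {n : ℕ} {w : ℕ → AB}
    (hst : pairSeqT s n = pairSeqT t n) (hs : s n = true) (ht : t n = false)
    (hws : isOmegaInf s w) : ¬ isOmegaInf t w := by
  intro hwt
  have hpre := List.prefix_of_getD_eq (hws (n + 1)) (hwt (n + 1))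
    (by simp [pairSeqT, hs, ht, hst, Ut, Vt]; omega)
  have hpref := not_snd_prefix_fst_append_snd t n
  simp only [pairSeqT, hs, ht, hst] at hpre
  generalize pairSeqT t n = p at hpre hpref
  obtain ⟨u, v⟩ := p
  -- `ε` and `ζ` are what remains of the two prefixes after their common head `u ++ v ++ v`
  exact hpref (List.prefix_append_of_append_prefix (ε := v ++ v ++ u ++ v ++ v ++ v)
    (ζ := u ++ v ++ v ++ v ++ v ++ u ++ v ++ v ++ v ++ v) (by simpa [Ut, Vt] using hpre))

instance : Uncountable (ℕ → Bool) := by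
  rw [← not_countable_iff, ← Cardinal.mk_le_aleph0_iff, not_le]
  simpa using Cardinal.cantor Cardinal.aleph0

theorem statement_13 (f g : (ℕ → Bool) → ℕ → AB)
    (hf : ∀ s : ℕ → Bool, isOmega0 s (f s))
    (hg : ∀ s : ℕ → Bool, isOmegaInf s (g s)) :
    Function.Injective f ∧ Function.Injective g ∧
    ¬ (Set.range f).Countable ∧ ¬ (Set.range g).Countable := by
  have hfi : Injective f := injective_of_ne_of_pairSeqT_eq fun s t _ hst hs ht hfst =>
    not_isOmega0_of_isOmega0 hst hs ht (hf s) (hfst ▸ hf t)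
  have hgi : Injective g := injective_of_ne_of_pairSeqT_eq fun s t _ hst hs ht hgst =>
    not_isOmegaInf_of_isOmegaInf hst hs ht (hg s) (hgst ▸ hg t)
  exact ⟨hfi, hgi, fun h => not_countable_univ (by simpa using h.preimage hfi),
    fun h => not_countable_univ (by simpa using h.preimage hgi)⟩
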